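/- arXiv:1801.01165 — 3 statements merged into one kernel-verified Lean document; each statement's English description precedes it below -/
import Mathlib

section
/- Let A ⊆ B be finite k-sparse graphs with predimension δ(X) = k|X| − |E(X)|. Then there exists a k-orientation of B in which A is successor-closed if and only if δ(A) ≤ δ(C) for every C with A ⊆ C ⊆ B. -/
/-!
In a `k`-orientation in which `A` is successor-closed, every edge of `C ⊇ A` not inside `A` has
its tail in `C \ A`, so `|E(C)| - |E(A)| ≤ k |C \ A|`, i.e. `δ(A) ≤ δ(C)`.

Conversely, an orientation is a choice of tail for each edge with every vertex chosen at most `k`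
times; `A` is successor-closed when edges not inside `A` get tails outside `A`. By Hall's theorem
for `k` copies of each vertex such a choice exists once every set `s` of edges has a set `T` of
admissible tails with `|s| ≤ k |T|`. The edges of `s` inside `A` lie in `E(T ∩ A)`, at most
`k |T ∩ A|` of them by sparsity; the others lie in `E(A ∪ T) \ E(A)`, at most `k |T \ A|` of
them by `δ(A) ≤ δ(A ∪ T)`.
-/

open scoped Classical

/-- Predimension `δ(B) = k|B| − #edges(B)` of a vertex subset. -/
noncomputable def delta {V : Type*} (k : ℕ) (Ed : Finset (Sym2 V)) (B : Finset V) : ℤ :=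
  (k : ℤ) * B.card - (Ed.filter fun e => ∀ x ∈ e, x ∈ B).card

open Finset

theorem Finset.exists_fiber_card_le_of_card_le_mul_card_biUnion {ι α : Type*} [Fintype ι]
    [DecidableEq α] (t : ι → Finset α) (k : ℕ) (h : ∀ s : Finset ι, #s ≤ k * #(s.biUnion t)) :
    ∃ f : ι → α, (∀ x, f x ∈ t x) ∧ ∀ a, #(univ.filter fun x => f x = a) ≤ k := by
  -- Hall's theorem for `k` copies of every target.
  have hall : ∀ s : Finset ι, #s ≤ #(s.biUnion fun x => t x ×ˢ (univ : Finset (Fin k))) := by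
    intro s
    have hprod : (s.biUnion fun x => t x ×ˢ (univ : Finset (Fin k))) = s.biUnion t ×ˢ univ := by
      ext; simp
    rw [hprod, card_product, card_univ, Fintype.card_fin, mul_comm]
    exact h s
  obtain ⟨g, hg_inj, hg⟩ := (all_card_le_biUnion_card_iff_exists_injective _).1 hall
  refine ⟨fun x => (g x).1, fun x => (mem_product.1 (hg x)).1, fun a => ?_⟩
  calc #(univ.filter fun x => (g x).1 = a)
      ≤ #(univ : Finset (Fin k)) := by
        refine card_le_card_of_injOn (fun x => (g x).2) (fun _ _ => mem_univ _) ?_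
        intro x hx y hy hxy
        simp only [coe_filter, mem_univ, true_and, Set.mem_ofPred_eq] at hx hy
        exact hg_inj (Prod.ext (hx.trans hy.symm) hxy)
    _ = k := by simp

section

variable {V : Type*}

noncomputable def edgesIn (Ed : Finset (Sym2 V)) (C : Finset V) : Finset (Sym2 V) :=
  Ed.filter fun e => ∀ x ∈ e, x ∈ C

theorem mem_edgesIn {Ed : Finset (Sym2 V)} {C : Finset V} {e : Sym2 V} :
    e ∈ edgesIn Ed C ↔ e ∈ Ed ∧ ∀ x ∈ e, x ∈ C :=
  mem_filter

theorem delta_eq (k : ℕ) (Ed : Finset (Sym2 V)) (C : Finset V) :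
    delta k Ed C = k * #C - #(edgesIn Ed C) :=
  rfl

theorem edgesIn_mono (Ed : Finset (Sym2 V)) {C D : Finset V} (h : C ⊆ D) :
    edgesIn Ed C ⊆ edgesIn Ed D :=
  fun _ he => mem_edgesIn.2 ⟨(mem_edgesIn.1 he).1, fun x hx => h ((mem_edgesIn.1 he).2 x hx)⟩

theorem delta_le_delta_iff {k : ℕ} {Ed : Finset (Sym2 V)} {A C : Finset V} (hAC : A ⊆ C) :
    delta k Ed A ≤ delta k Ed C ↔ #(edgesIn Ed C) ≤ #(edgesIn Ed A) + k * #(C \ A) := by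
  have hcard : (#(C \ A) : ℤ) + #A = #C := by exact_mod_cast card_sdiff_add_card_eq_card hAC
  rw [delta_eq, delta_eq, ← hcard, ← Nat.cast_le (α := ℤ)]
  push_cast
  constructor <;> intro <;> linarith

theorem card_edgesIn_le_of_succClosed [Fintype V] {k : ℕ} {Ed : Finset (Sym2 V)}
    {S : V → V → Prop} {A C : Finset V} (hcover : ∀ a b, s(a, b) ∈ Ed → S a b ∨ S b a)
    (hdeg : ∀ a, #(univ.filter fun b => S a b) ≤ k) (hA : ∀ a ∈ A, ∀ b, S a b → b ∈ A)
    (hAC : A ⊆ C) : #(edgesIn Ed C) ≤ #(edgesIn Ed A) + k * #(C \ A) := by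
  set out : V → Finset (Sym2 V) := fun a => (univ.filter fun b => S a b).image fun b => s(a, b)
  -- A new edge of `C` has its tail in `C \ A`: a tail in `A` would force the head into `A`.
  have hnew : edgesIn Ed C \ edgesIn Ed A ⊆ (C \ A).biUnion out := by
    have hdir : ∀ a b, s(a, b) ∈ edgesIn Ed C \ edgesIn Ed A → S a b →
        s(a, b) ∈ (C \ A).biUnion out := by
      intro a b he hab
      simp only [mem_sdiff, mem_edgesIn, Sym2.forall_mem_pair, not_and] at he
      refine mem_biUnion.2 ⟨a, mem_sdiff.2 ⟨he.1.2.1, fun ha => ?_⟩, ?_⟩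
      · exact he.2 he.1.1 ha (hA a ha b hab)
      · exact mem_image.2 ⟨b, mem_filter.2 ⟨mem_univ _, hab⟩, rfl⟩
    intro e he
    induction e using Sym2.ind with
    | _ a b =>
      have hEd : s(a, b) ∈ Ed := (mem_edgesIn.1 (mem_sdiff.1 he).1).1
      rcases hcover a b hEd with hab | hba
      · exact hdir a b he hab
      · rw [Sym2.eq_swap] at he ⊢
        exact hdir b a he hba
  calc #(edgesIn Ed C)
      = #(edgesIn Ed C \ edgesIn Ed A) + #(edgesIn Ed A) :=
        (card_sdiff_add_card_eq_card (edgesIn_mono Ed hAC)).symm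
    _ ≤ (∑ a ∈ C \ A, #(out a)) + #(edgesIn Ed A) :=
        Nat.add_le_add_right ((card_le_card hnew).trans card_biUnion_le) _
    _ ≤ (∑ _a ∈ C \ A, k) + #(edgesIn Ed A) :=
        Nat.add_le_add_right (sum_le_sum fun a _ => card_image_le.trans (hdeg a)) _
    _ = #(edgesIn Ed A) + k * #(C \ A) := by rw [sum_const, smul_eq_mul, add_comm, mul_comm]

noncomputable def admissibleTails [Fintype V] (A : Finset V) (e : Sym2 V) : Finset V :=
  univ.filter fun v => v ∈ e ∧ ((∀ x ∈ e, x ∈ A) ∨ v ∉ A)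

theorem mem_of_mem_admissibleTails [Fintype V] {A : Finset V} {e : Sym2 V} {v : V}
    (h : v ∈ admissibleTails A e) : v ∈ e :=
  (mem_filter.1 h).2.1

theorem card_le_mul_card_biUnion_admissibleTails [Fintype V] {k : ℕ} {Ed : Finset (Sym2 V)}
    {A : Finset V} (hsparse : ∀ C, #(edgesIn Ed C) ≤ k * #C)
    (hdelta : ∀ C, A ⊆ C → #(edgesIn Ed C) ≤ #(edgesIn Ed A) + k * #(C \ A))
    {s : Finset (Sym2 V)} (hs : s ⊆ Ed) : #s ≤ k * #(s.biUnion (admissibleTails A)) := by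
  set T := s.biUnion (admissibleTails A)
  set inA := s.filter fun e => ∀ x ∈ e, x ∈ A
  set outA := s.filter fun e => ¬ ∀ x ∈ e, x ∈ A
  have hinA : #inA ≤ k * #(T ∩ A) := by
    refine (card_le_card fun e he => ?_).trans (hsparse (T ∩ A))
    obtain ⟨hes, heA⟩ := mem_filter.1 he
    refine mem_edgesIn.2 ⟨hs hes, fun x hx => mem_inter.2 ⟨?_, heA x hx⟩⟩
    exact mem_biUnion.2 ⟨e, hes, mem_filter.2 ⟨mem_univ _, hx, Or.inl heA⟩⟩
  have houtA : #outA ≤ k * #(T \ A) := by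
    have hsub : outA ⊆ edgesIn Ed (A ∪ T) \ edgesIn Ed A := by
      intro e he
      obtain ⟨hes, heA⟩ := mem_filter.1 he
      refine mem_sdiff.2 ⟨mem_edgesIn.2 ⟨hs hes, fun x hx => ?_⟩, fun h => heA (mem_edgesIn.1 h).2⟩
      by_cases hxA : x ∈ A
      · exact mem_union_left _ hxA
      · exact mem_union_right _
          (mem_biUnion.2 ⟨e, hes, mem_filter.2 ⟨mem_univ _, hx, Or.inr hxA⟩⟩)
    have hsplit :=
      card_sdiff_add_card_eq_card (edgesIn_mono Ed (subset_union_left (s₁ := A) (s₂ := T)))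
    have hAT := hdelta (A ∪ T) subset_union_left
    rw [union_sdiff_left] at hAT
    have := card_le_card hsub
    omega
  calc #s = #inA + #outA := (card_filter_add_card_filter_not _).symm
    _ ≤ k * #(T ∩ A) + k * #(T \ A) := add_le_add hinA houtA
    _ = k * #T := by rw [← mul_add, card_inter_add_card_sdiff]

def orientationOfTail (Ed : Finset (Sym2 V)) (tail : Ed → V) (a b : V) : Prop :=
  ∃ h : s(a, b) ∈ Ed, tail ⟨s(a, b), h⟩ = a

section orientationOfTail

variable {Ed : Finset (Sym2 V)} {tail : Ed → V}

theorem orientationOfTail_swap {a b : V} (h : s(a, b) ∈ Ed) :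
    orientationOfTail Ed tail b a ↔ tail ⟨s(a, b), h⟩ = b := by
  have hswap : (⟨s(b, a), Sym2.eq_swap ▸ h⟩ : Ed) = ⟨s(a, b), h⟩ := Subtype.ext Sym2.eq_swap
  exact ⟨fun ⟨_, hb⟩ => hswap ▸ hb, fun hb => ⟨_, hswap ▸ hb⟩⟩

theorem mem_iff_orientationOfTail_or (htail : ∀ e, tail e ∈ e.1) (a b : V) :
    s(a, b) ∈ Ed ↔ orientationOfTail Ed tail a b ∨ orientationOfTail Ed tail b a := by
  refine ⟨fun h => ?_, fun h => h.elim (·.1) fun ⟨h, _⟩ => Sym2.eq_swap ▸ h⟩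
  rw [orientationOfTail_swap h]
  exact (Sym2.mem_iff.1 (htail ⟨s(a, b), h⟩)).imp (⟨h, ·⟩) id

theorem not_orientationOfTail_and (hEd : ∀ e ∈ Ed, ¬ e.IsDiag) (a b : V) :
    ¬ (orientationOfTail Ed tail a b ∧ orientationOfTail Ed tail b a) := by
  rintro ⟨⟨h, ha⟩, hb⟩
  rw [orientationOfTail_swap h] at hb
  exact hEd _ h (Sym2.mk_isDiag_iff.2 (ha.symm.trans hb))

theorem card_filter_orientationOfTail_le [Fintype V] (a : V) :
    #(univ.filter fun b => orientationOfTail Ed tail a b) ≤ #(univ.filter fun e => tail e = a) :=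
  calc #(univ.filter fun b => orientationOfTail Ed tail a b)
      = #((univ.filter fun b => orientationOfTail Ed tail a b).image fun b => s(a, b)) :=
        (card_image_of_injective _ fun _ _ => Sym2.congr_right.1).symm
    _ ≤ #((univ.filter fun e => tail e = a).image Subtype.val) := by
        refine card_le_card fun e he => ?_
        obtain ⟨b, hb, rfl⟩ := mem_image.1 he
        obtain ⟨h, hab⟩ := (mem_filter.1 hb).2
        exact mem_image.2 ⟨⟨s(a, b), h⟩, mem_filter.2 ⟨mem_univ _, hab⟩, rfl⟩
    _ ≤ #(univ.filter fun e => tail e = a) := card_image_le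

theorem orientationOfTail_succClosed [Fintype V] {A : Finset V}
    (htail : ∀ e, tail e ∈ admissibleTails A e.1) {a b : V} (ha : a ∈ A)
    (hab : orientationOfTail Ed tail a b) : b ∈ A := by
  obtain ⟨h, hab⟩ := hab
  rcases (mem_filter.1 (htail ⟨s(a, b), h⟩)).2.2 with hA | hA
  · exact hA b (Sym2.mem_mk_right a b)
  · exact absurd ha (hab ▸ hA)

end orientationOfTail

end

/-- For finite `k`-sparse graphs `A ⊆ B`, there is a `k`-orientation of `B` in which
`A` is successor-closed iff `δ(A) ≤ δ(C)` for all `A ⊆ C ⊆ B`. -/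
theorem succClosed_orientation_iff (k : ℕ) (V : Type*) [Fintype V]
    (Ed : Finset (Sym2 V)) (hEd : ∀ e ∈ Ed, ¬ e.IsDiag)
    (hsparse : ∀ C : Finset V, (Ed.filter fun e => ∀ x ∈ e, x ∈ C).card ≤ k * C.card)
    (A : Finset V) :
    (∃ S : V → V → Prop,
        (∀ a b : V, s(a, b) ∈ Ed ↔ (S a b ∨ S b a)) ∧
        (∀ a b : V, ¬ (S a b ∧ S b a)) ∧
        (∀ a : V, (Finset.univ.filter fun b => S a b).card ≤ k) ∧
        (∀ a ∈ A, ∀ b : V, S a b → b ∈ A)) ↔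
      (∀ C : Finset V, A ⊆ C → delta k Ed A ≤ delta k Ed C) := by
  refine ⟨fun ⟨S, hiff, _, hdeg, hA⟩ C hAC => ?_, fun hdelta => ?_⟩
  · exact (delta_le_delta_iff hAC).2
      (card_edgesIn_le_of_succClosed (fun a b => (hiff a b).1) hdeg hA hAC)
  have hhall (s : Finset Ed) : #s ≤ k * #(s.biUnion fun e => admissibleTails A e.1) := by
    have := card_le_mul_card_biUnion_admissibleTails (fun C => by unfold edgesIn; convert hsparse C)
      (fun C hAC => (delta_le_delta_iff hAC).1 (hdelta C hAC)) (s := s.map (.subtype _))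
      (fun e he => by obtain ⟨e, -, rfl⟩ := mem_map.1 he; exact e.2)
    simpa [map_eq_image, image_biUnion, card_image_of_injective _ Subtype.val_injective] using this
  obtain ⟨tail, htail, hfiber⟩ := exists_fiber_card_le_of_card_le_mul_card_biUnion _ k hhall
  exact ⟨orientationOfTail Ed tail,
    mem_iff_orientationOfTail_or fun e => mem_of_mem_admissibleTails (htail e),
    not_orientationOfTail_and hEd,
    fun a => (card_filter_orientationOfTail_le a).trans (hfiber a),
    fun _ ha _ => orientationOfTail_succClosed htail ha⟩
end

section
/- Let B be a finite k-sparse graph and suppose A₁ ≤_d B and A₂ ≤_d B. Then A₁ ∩ A₂ ≤_d B. -/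
open scoped Classical

lemma delta_submod {V : Type*} [DecidableEq V] (k : ℕ) (Ed : Finset (Sym2 V))
    (X Y : Finset V) :
    delta k Ed (X ∪ Y) + delta k Ed (X ∩ Y) ≤ delta k Ed X + delta k Ed Y := by
  unfold delta
  have hcard : ((X ∪ Y).card : ℤ) + (X ∩ Y).card = X.card + Y.card := by
    exact_mod_cast Finset.card_union_add_card_inter X Y
  have hE : (Ed.filter fun e => ∀ x ∈ e, x ∈ X).card +
      (Ed.filter fun e => ∀ x ∈ e, x ∈ Y).card ≤
      (Ed.filter fun e => ∀ x ∈ e, x ∈ X ∪ Y).card +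
      (Ed.filter fun e => ∀ x ∈ e, x ∈ X ∩ Y).card := by
    rw [← Finset.card_union_add_card_inter]
    refine Nat.add_le_add ?_ ?_
    · apply Finset.card_le_card
      intro e he
      simp only [Finset.mem_union, Finset.mem_filter] at he ⊢
      rcases he with ⟨h1, h2⟩ | ⟨h1, h2⟩ <;>
        exact ⟨h1, fun x hx => by simp [h2 x hx]⟩
    · apply Finset.card_le_card
      intro e he
      simp only [Finset.mem_inter, Finset.mem_filter] at he ⊢
      exact ⟨he.1.1, fun x hx => ⟨he.1.2 x hx, he.2.2 x hx⟩⟩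
  have hE' : ((Ed.filter fun e => ∀ x ∈ e, x ∈ X).card : ℤ) +
      (Ed.filter fun e => ∀ x ∈ e, x ∈ Y).card ≤
      ((Ed.filter fun e => ∀ x ∈ e, x ∈ X ∪ Y).card : ℤ) +
      (Ed.filter fun e => ∀ x ∈ e, x ∈ X ∩ Y).card := by exact_mod_cast hE
  have hmul : (k : ℤ) * ((X ∪ Y).card + (X ∩ Y).card : ℤ) =
      (k : ℤ) * ((X.card : ℤ) + Y.card) := by rw [hcard]
  nlinarith [hmul, hE']

lemma aux1 {V : Type*} [DecidableEq V] (k : ℕ) (Ed : Finset (Sym2 V))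
    (A₁ A₂ : Finset V)
    (hA₂ : ∀ C : Finset V, A₂ ⊆ C → A₂ ≠ C → delta k Ed A₂ < delta k Ed C)
    (C : Finset V) (hsub : A₁ ∩ A₂ ⊆ C) (hC : C ⊆ A₁) (hne : A₁ ∩ A₂ ≠ C) :
    delta k Ed (A₁ ∩ A₂) < delta k Ed C := by
  have hA2ne : A₂ ≠ C ∪ A₂ := by
    intro h
    apply hne
    apply Finset.Subset.antisymm hsub
    intro x hxC
    refine Finset.mem_inter.2 ⟨hC hxC, ?_⟩
    have : x ∈ C ∪ A₂ := Finset.mem_union_left _ hxC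
    rwa [← h] at this
  have h1 := hA₂ _ Finset.subset_union_right hA2ne
  have hsm := delta_submod k Ed C A₂
  have hInter : C ∩ A₂ = A₁ ∩ A₂ := by
    apply Finset.Subset.antisymm
    · intro x hx
      exact Finset.mem_inter.2 ⟨hC (Finset.mem_inter.1 hx).1, (Finset.mem_inter.1 hx).2⟩
    · intro x hx
      exact Finset.mem_inter.2 ⟨hsub hx, (Finset.mem_inter.1 hx).2⟩
  rw [hInter] at hsm
  linarith

/-- In a finite `k`-sparse graph `B` (here the whole vertex set): if `A₁ ≤_d B`
and `A₂ ≤_d B`, then `A₁ ∩ A₂ ≤_d B`. -/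
theorem inter_dClosed (k : ℕ) (V : Type*) [Fintype V] [DecidableEq V]
    (Ed : Finset (Sym2 V)) (hEd : ∀ e ∈ Ed, ¬ e.IsDiag)
    (hsparse : ∀ C : Finset V, (Ed.filter fun e => ∀ x ∈ e, x ∈ C).card ≤ k * C.card)
    (A₁ A₂ : Finset V)
    (hA₁ : ∀ C : Finset V, A₁ ⊆ C → A₁ ≠ C → delta k Ed A₁ < delta k Ed C)
    (hA₂ : ∀ C : Finset V, A₂ ⊆ C → A₂ ≠ C → delta k Ed A₂ < delta k Ed C) :
    ∀ C : Finset V, A₁ ∩ A₂ ⊆ C → A₁ ∩ A₂ ≠ C →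
      delta k Ed (A₁ ∩ A₂) < delta k Ed C := by
  intro C hsub hne
  by_cases hC1 : C ⊆ A₁
  · exact aux1 k Ed A₁ A₂ hA₂ C hsub hC1 hne
  · have hA1ne : A₁ ≠ C ∪ A₁ := by
      intro h
      apply hC1
      intro x hx
      have : x ∈ C ∪ A₁ := Finset.mem_union_left _ hx
      rwa [← h] at this
    have h1 := hA₁ _ Finset.subset_union_right hA1ne
    have hsm := delta_submod k Ed C A₁
    have h2 : delta k Ed (C ∩ A₁) < delta k Ed C := by linarith
    have hsub' : A₁ ∩ A₂ ⊆ C ∩ A₁ := fun x hx =>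
      Finset.mem_inter.2 ⟨hsub hx, (Finset.mem_inter.1 hx).1⟩
    by_cases heq : A₁ ∩ A₂ = C ∩ A₁
    · rw [heq]; exact h2
    · have h3 := aux1 k Ed A₁ A₂ hA₂ (C ∩ A₁) hsub' Finset.inter_subset_right heq
      linarith
end

section
/- Let A be a finite k-oriented digraph that is fine (has no proper refinement), and let B be a successor-closed subdigraph of A. Then B is fine. -/
open scoped Classical

/-- A `k`-oriented digraph: loopless, asymmetric, all out-degrees at most `k`. -/
def IsKDigraph (k : ℕ) {V : Type*} [Fintype V] (S : V → V → Prop) : Prop :=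
  (∀ a, ¬ S a a) ∧ (∀ a b, ¬ (S a b ∧ S b a)) ∧
    ∀ a : V, (Finset.univ.filter fun b => S a b).card ≤ k

/-- Two digraphs are orientations of the same underlying undirected graph. -/
def SameGraph {V : Type*} (S S' : V → V → Prop) : Prop :=
  ∀ a b, (S a b ∨ S b a) ↔ (S' a b ∨ S' b a)

/-- `D` is successor-closed in `S`. -/
def SuccClosed {V : Type*} (S : V → V → Prop) (D : Set V) : Prop :=
  ∀ a ∈ D, ∀ b, S a b → b ∈ D

/-- `S'` is a refinement of `S`: a `k`-orientation of the same undirected graph in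
which every successor-closed subset of `S` is again successor-closed. -/
def Refines (k : ℕ) {V : Type*} [Fintype V] (S' S : V → V → Prop) : Prop :=
  IsKDigraph k S' ∧ SameGraph S S' ∧ ∀ D : Set V, SuccClosed S D → SuccClosed S' D

/-- `S` is fine: it has no proper refinement (every refinement of `S` is refined
back by `S`). -/
def Fine (k : ℕ) {V : Type*} [Fintype V] (S : V → V → Prop) : Prop :=
  IsKDigraph k S ∧ ∀ S' : V → V → Prop, Refines k S' S → Refines k S S'

/-!
Given a refinement `T` of the restriction of `S` to the successor-closed set `B`, reorient
the edges inside `B` as in `T`. Since no edge of `S` leaves `B`, this is again a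
`k`-orientation and it refines `S`. Fineness of `S` makes `S` refine it back, and restricting
that back-refinement to `B` shows that the restriction of `S` refines `T`.
-/

open Finset

section Splice

variable {V : Type*}

def spliceOn (S : V → V → Prop) (B : Finset V) (T : B → B → Prop) : V → V → Prop :=
  fun a b => if h : a ∈ B ∧ b ∈ B then T ⟨a, h.1⟩ ⟨b, h.2⟩ else S a b

variable {S : V → V → Prop} {B : Finset V} {T : B → B → Prop}

theorem spliceOn_iff_of_mem {a b : V} (ha : a ∈ B) (hb : b ∈ B) :
    spliceOn S B T a b ↔ T ⟨a, ha⟩ ⟨b, hb⟩ := by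
  simp only [spliceOn, dif_pos (And.intro ha hb)]

theorem spliceOn_iff_of_not_mem {a b : V} (h : ¬ (a ∈ B ∧ b ∈ B)) :
    spliceOn S B T a b ↔ S a b := by
  simp only [spliceOn, dif_neg h]

theorem mem_of_spliceOn (hB : SuccClosed S B) {a b : V} (ha : a ∈ B)
    (hab : spliceOn S B T a b) : b ∈ B := by
  by_contra hb
  exact hb (hB a ha b ((spliceOn_iff_of_not_mem fun h => hb h.2).mp hab))

theorem sameGraph_spliceOn (hT : SameGraph (fun a b : B => S a b) T) :
    SameGraph S (spliceOn S B T) := by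
  intro a b
  by_cases hab : a ∈ B ∧ b ∈ B
  · rw [spliceOn_iff_of_mem hab.1 hab.2, spliceOn_iff_of_mem hab.2 hab.1]
    exact hT ⟨a, hab.1⟩ ⟨b, hab.2⟩
  · rw [spliceOn_iff_of_not_mem hab, spliceOn_iff_of_not_mem fun h => hab h.symm]

theorem SameGraph.of_spliceOn (h : SameGraph (spliceOn S B T) S) :
    SameGraph T (fun a b : B => S a b) := by
  intro x y
  have hxy := h x y
  rwa [spliceOn_iff_of_mem x.2 y.2, spliceOn_iff_of_mem y.2 x.2] at hxy

theorem SuccClosed.restrict {D : Set V} (hD : SuccClosed S D) :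
    SuccClosed (fun a b : B => S a b) (Subtype.val ⁻¹' D) :=
  fun x hx y hxy => hD x hx y hxy

theorem succClosed_spliceOn {D : Set V} (hD : SuccClosed S D)
    (hT : SuccClosed T (Subtype.val ⁻¹' D)) : SuccClosed (spliceOn S B T) D := by
  intro a ha b hab
  by_cases h : a ∈ B ∧ b ∈ B
  · exact hT ⟨a, h.1⟩ ha ⟨b, h.2⟩ ((spliceOn_iff_of_mem h.1 h.2).mp hab)
  · exact hD a ha b ((spliceOn_iff_of_not_mem h).mp hab)

theorem SuccClosed.image_val_spliceOn {D : Set B} (hD : SuccClosed T D) (hB : SuccClosed S B) :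
    SuccClosed (spliceOn S B T) (Subtype.val '' D) := by
  rintro _ ⟨x, hx, rfl⟩ b hxb
  have hb : b ∈ B := mem_of_spliceOn hB x.2 hxb
  exact ⟨⟨b, hb⟩, hD x hx _ ((spliceOn_iff_of_mem x.2 hb).mp hxb), rfl⟩

variable [Fintype V] {k : ℕ}

theorem IsKDigraph.restrict (hS : IsKDigraph k S) (B : Finset V) :
    IsKDigraph k (fun a b : B => S a b) := by
  obtain ⟨hirr, hasym, hdeg⟩ := hS
  refine ⟨fun a => hirr a, fun a b => hasym a b, fun a => (hdeg a).trans' ?_⟩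
  exact card_le_card_of_injOn Subtype.val (fun b hb => by simpa using hb)
    Subtype.val_injective.injOn

theorem card_spliceOn_succ_le (hS : IsKDigraph k S) (hB : SuccClosed S B) (hT : IsKDigraph k T)
    (a : V) : #{b | spliceOn S B T a b} ≤ k := by
  by_cases ha : a ∈ B
  · refine (hT.2.2 ⟨a, ha⟩).trans' (card_le_card_of_surjOn Subtype.val fun b hb => ?_)
    simp only [coe_filter, mem_univ, true_and, Set.mem_ofPred_eq] at hb ⊢
    have hbB := mem_of_spliceOn hB ha hb
    exact ⟨⟨b, hbB⟩, (spliceOn_iff_of_mem ha hbB).mp hb, rfl⟩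
  · refine (hS.2.2 a).trans' (card_le_card (monotone_filter_right _ fun b _ hb => ?_))
    exact (spliceOn_iff_of_not_mem fun h => ha h.1).mp hb

theorem isKDigraph_spliceOn (hS : IsKDigraph k S) (hB : SuccClosed S B) (hT : IsKDigraph k T) :
    IsKDigraph k (spliceOn S B T) := by
  refine ⟨fun a h => ?_, fun a b h => ?_, card_spliceOn_succ_le hS hB hT⟩
  · by_cases ha : a ∈ B
    · exact hT.1 _ ((spliceOn_iff_of_mem ha ha).mp h)
    · exact hS.1 a ((spliceOn_iff_of_not_mem fun h => ha h.1).mp h)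
  · by_cases hab : a ∈ B ∧ b ∈ B
    · rw [spliceOn_iff_of_mem hab.1 hab.2, spliceOn_iff_of_mem hab.2 hab.1] at h
      exact hT.2.1 _ _ h
    · rw [spliceOn_iff_of_not_mem hab, spliceOn_iff_of_not_mem fun h => hab h.symm] at h
      exact hS.2.1 a b h

theorem refines_spliceOn (hT : Refines k T (fun a b : B => S a b)) (hS : IsKDigraph k S)
    (hB : SuccClosed S B) : Refines k (spliceOn S B T) S :=
  ⟨isKDigraph_spliceOn hS hB hT.1, sameGraph_spliceOn hT.2.1,
    fun _ hD => succClosed_spliceOn hD (hT.2.2 _ hD.restrict)⟩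

theorem Refines.restrict_of_spliceOn (h : Refines k S (spliceOn S B T)) (hS : IsKDigraph k S)
    (hB : SuccClosed S B) : Refines k (fun a b : B => S a b) T := by
  refine ⟨hS.restrict B, h.2.1.of_spliceOn, fun D hD => ?_⟩
  have hD' := (h.2.2 _ (hD.image_val_spliceOn hB)).restrict (B := B)
  rwa [Set.preimage_image_eq _ Subtype.val_injective] at hD'

end Splice

/-- A successor-closed subdigraph of a fine `k`-oriented digraph is fine. -/
theorem succClosed_of_fine_is_fine (k : ℕ) (V : Type*) [Fintype V]
    (S : V → V → Prop) (hfine : Fine k S)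
    (B : Finset V) (hB : SuccClosed S (↑B : Set V)) :
    Fine k (fun a b : {x // x ∈ B} => S a b) := by
  obtain ⟨hS, hback⟩ := hfine
  refine ⟨hS.restrict B, fun T hT => ?_⟩
  exact (hback _ (refines_spliceOn hT hS hB)).restrict_of_spliceOn hS hB
end
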